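/- Let M ≥ 2, let P_1,…,P_M be probability mass functions on a finite alphabet 𝒳 (the true distributions), and let T_1,…,T_M be probability mass functions on 𝒳 (the nominal distributions). Suppose there exists Δ > 0 such that for every i ∈ {1,…,M}, V(P_i, T_i) ≤ (min_{j ≠ i} V(T_i, T_j) − Δ)/2. Then for every i ∈ {1,…,M}, if a test sequence x^n of length n is drawn i.i.d. from P_i, the probability that the DGL test with nominal distributions T_1,…,T_M applied to x^n does not accept hypothesis i is at most 2M · exp(−n(Δ²/2 − 2·ln(M−1)/n)). -/

import Mathlib

open MeasureTheory ProbabilityTheory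

/-- Total variation distance between two probability mass functions on a
finite alphabet: `V(P,Q) = (1/2) * ∑ a, |P a - Q a|`. -/
noncomputable def tvDist {𝒳 : Type*} [Fintype 𝒳] (P Q : 𝒳 → ℝ) : ℝ :=
  (1 / 2) * ∑ a, |P a - Q a|

/-- Empirical distribution of a sample `x : Fin N → 𝒳`:
`T a = (1/N) * #{k : x k = a}`. -/
noncomputable def empDist {𝒳 : Type*} [Fintype 𝒳] [DecidableEq 𝒳] {N : ℕ}
    (x : Fin N → 𝒳) : 𝒳 → ℝ :=
  fun a => ((Finset.univ.filter fun k => x k = a).card : ℝ) / N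

/-- The DGL statistic of hypothesis `i`: the maximum over the sets
`A_{p,q} = {a : T q a ≤ T p a}` (for `p < q`) of `|T_i(A) - ν(A)|`,
where `ν` is a (sub)probability vector (e.g. an empirical distribution). -/
noncomputable def dglScore {𝒳 : Type*} [Fintype 𝒳] {M : ℕ}
    (T : Fin M → 𝒳 → ℝ) (ν : 𝒳 → ℝ) (i : Fin M) : ℝ :=
  sSup {x | ∃ p q : Fin M, p < q ∧
    x = |(∑ a ∈ Finset.univ.filter fun a => T q a ≤ T p a, T i a) -
         (∑ a ∈ Finset.univ.filter fun a => T q a ≤ T p a, ν a)|}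

/-- The DGL test: accept the smallest hypothesis index minimizing the DGL statistic. -/
noncomputable def dglClassify {𝒳 : Type*} [Fintype 𝒳] {M : ℕ} (hM : 0 < M)
    (T : Fin M → 𝒳 → ℝ) (ν : 𝒳 → ℝ) : Fin M :=
  (Finset.univ.filter fun i => ∀ j, dglScore T ν i ≤ dglScore T ν j).min' (by
    obtain ⟨i, -, hi⟩ := Finset.exists_min_image Finset.univ (dglScore T ν)
      ⟨⟨0, hM⟩, Finset.mem_univ _⟩
    exact ⟨i, Finset.mem_filter.mpr ⟨Finset.mem_univ _, fun j => hi j (Finset.mem_univ _)⟩⟩)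

/-- Minimum of `tvDist (T i) (T j)` over indices `j ≠ i`, for a fixed `i`. -/
noncomputable def minTVfrom {𝒳 : Type*} [Fintype 𝒳] {M : ℕ}
    (T : Fin M → 𝒳 → ℝ) (i : Fin M) : ℝ :=
  sInf {x | ∃ j : Fin M, j ≠ i ∧ x = tvDist (T i) (T j)}


/-!
If the test does not accept `i`, the accepted index `c ≠ i` has score at most that of `i`.
By Scheffé's identity, `V(T_i, T_c) = T_i(A) - T_c(A)` for the set `A` of the pair `{i, c}`, so
`min_{j ≠ i} V(T_i, T_j) ≤ score(i) + score(c) ≤ 2 score(i)`. On the other hand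
`score(i) ≤ V(P_i, T_i) + max_A |P_i(A) - μ_n(A)|`, and the robustness assumption then forces
`|P_i(A) - μ_n(A)| ≥ Δ / 2` for some `A ∈ 𝒜`. Hoeffding's inequality bounds the probability of
each such deviation by `2 exp(-nΔ²/2)`, and a union bound over the at most `M(M - 1)` pairs gives
the claim, since `M(M - 1) ≤ M(M - 1)²`.
-/

open Real

section TotalVariation

variable {𝒳 : Type*} [Fintype 𝒳]

lemma tvDist_nonneg (P Q : 𝒳 → ℝ) : 0 ≤ tvDist P Q := by
  unfold tvDist
  positivity

lemma tvDist_comm (P Q : 𝒳 → ℝ) : tvDist P Q = tvDist Q P := by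
  simp only [tvDist, abs_sub_comm]

lemma sum_compl_sub_eq_neg [DecidableEq 𝒳] {P Q : 𝒳 → ℝ} (h : ∑ a, P a = ∑ a, Q a)
    (s : Finset 𝒳) : ∑ a ∈ sᶜ, (P a - Q a) = -∑ a ∈ s, (P a - Q a) := by
  rw [eq_neg_iff_add_eq_zero, add_comm, Finset.sum_add_sum_compl, Finset.sum_sub_distrib, h,
    sub_self]

lemma abs_sum_sub_sum_le_tvDist {P Q : 𝒳 → ℝ} (h : ∑ a, P a = ∑ a, Q a) (s : Finset 𝒳) :
    |∑ a ∈ s, P a - ∑ a ∈ s, Q a| ≤ tvDist P Q := by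
  classical
  have h_compl := sum_compl_sub_eq_neg h s
  have h_s := Finset.abs_sum_le_sum_abs (fun a ↦ P a - Q a) s
  have h_sc := Finset.abs_sum_le_sum_abs (fun a ↦ P a - Q a) sᶜ
  rw [h_compl, abs_neg] at h_sc
  rw [tvDist, ← Finset.sum_add_sum_compl s, ← Finset.sum_sub_distrib]
  linarith

lemma tvDist_eq_sum_sub_sum {P Q : 𝒳 → ℝ} (h : ∑ a, P a = ∑ a, Q a) :
    tvDist P Q = ∑ a with Q a ≤ P a, P a - ∑ a with Q a ≤ P a, Q a := by
  classical
  set s : Finset 𝒳 := {a | Q a ≤ P a}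
  have h_compl := sum_compl_sub_eq_neg h s
  have h_s : ∑ a ∈ s, |P a - Q a| = ∑ a ∈ s, (P a - Q a) :=
    Finset.sum_congr rfl fun a ha ↦ abs_of_nonneg (sub_nonneg.2 (Finset.mem_filter.1 ha).2)
  have h_sc : ∑ a ∈ sᶜ, |P a - Q a| = -∑ a ∈ sᶜ, (P a - Q a) := by
    rw [← Finset.sum_neg_distrib]
    refine Finset.sum_congr rfl fun a ha ↦ abs_of_neg (sub_neg.2 ?_)
    simpa [s] using ha
  rw [tvDist, ← Finset.sum_add_sum_compl s, h_s, h_sc, h_compl, ← Finset.sum_sub_distrib]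
  ring

end TotalVariation

section DGL

variable {𝒳 : Type*} [Fintype 𝒳] {M : ℕ} (T : Fin M → 𝒳 → ℝ) (ν : 𝒳 → ℝ)

noncomputable def dglSet (p q : Fin M) : Finset 𝒳 := {a | T q a ≤ T p a}

lemma finite_dglScore_values (i : Fin M) :
    {x | ∃ p q : Fin M, p < q ∧
      x = |∑ a ∈ dglSet T p q, T i a - ∑ a ∈ dglSet T p q, ν a|}.Finite :=
  (Set.finite_range fun r : Fin M × Fin M ↦
    |∑ a ∈ dglSet T r.1 r.2, T i a - ∑ a ∈ dglSet T r.1 r.2, ν a|).subset <| by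
      rintro x ⟨p, q, -, rfl⟩
      exact ⟨(p, q), rfl⟩

lemma abs_sub_le_dglScore {i p q : Fin M} (hpq : p < q) :
    |∑ a ∈ dglSet T p q, T i a - ∑ a ∈ dglSet T p q, ν a| ≤ dglScore T ν i :=
  le_csSup (finite_dglScore_values T ν i).bddAbove ⟨p, q, hpq, rfl⟩

lemma exists_dglScore_eq (hM : 2 ≤ M) (i : Fin M) :
    ∃ p q : Fin M, p < q ∧
      dglScore T ν i = |∑ a ∈ dglSet T p q, T i a - ∑ a ∈ dglSet T p q, ν a| := by
  refine Set.Nonempty.csSup_mem ?_ (finite_dglScore_values T ν i)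
  exact ⟨_, ⟨0, by omega⟩, ⟨1, by omega⟩, Fin.mk_lt_mk.2 zero_lt_one, rfl⟩

lemma tvDist_le_dglScore_add {p q : Fin M} (hT : ∑ a, T p a = ∑ a, T q a) (hpq : p < q) :
    tvDist (T p) (T q) ≤ dglScore T ν p + dglScore T ν q := by
  have hp := abs_le.1 (abs_sub_le_dglScore T ν (i := p) hpq)
  have hq := abs_le.1 (abs_sub_le_dglScore T ν (i := q) hpq)
  have hScheffe : tvDist (T p) (T q) = ∑ a ∈ dglSet T p q, T p a - ∑ a ∈ dglSet T p q, T q a :=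
    tvDist_eq_sum_sub_sum hT
  linarith

lemma dglScore_dglClassify_le (hM : 0 < M) (j : Fin M) :
    dglScore T ν (dglClassify hM T ν) ≤ dglScore T ν j := by
  have hmem : dglClassify hM T ν ∈
      ({c | ∀ j, dglScore T ν c ≤ dglScore T ν j} : Finset (Fin M)) := Finset.min'_mem _ _
  exact (Finset.mem_filter.1 hmem).2 j

lemma minTVfrom_le_tvDist {i j : Fin M} (hji : j ≠ i) : minTVfrom T i ≤ tvDist (T i) (T j) :=
  csInf_le ⟨0, by rintro x ⟨j', -, rfl⟩; exact tvDist_nonneg _ _⟩ ⟨j, hji, rfl⟩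

lemma minTVfrom_le_two_mul_dglScore (hT1 : ∀ j, ∑ a, T j a = 1) (hM : 0 < M) {i : Fin M}
    (h : dglClassify hM T ν ≠ i) : minTVfrom T i ≤ 2 * dglScore T ν i := by
  set c := dglClassify hM T ν
  have htv : tvDist (T i) (T c) ≤ dglScore T ν i + dglScore T ν c := by
    rcases lt_or_gt_of_ne h with hci | hic
    · rw [tvDist_comm, add_comm]
      exact tvDist_le_dglScore_add T ν (by rw [hT1, hT1]) hci
    · exact tvDist_le_dglScore_add T ν (by rw [hT1, hT1]) hic
  linarith [minTVfrom_le_tvDist T h, dglScore_dglClassify_le T ν hM i]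

lemma exists_abs_sub_ge_of_dglClassify_ne (hT1 : ∀ j, ∑ a, T j a = 1) {Q : 𝒳 → ℝ}
    (hQ1 : ∑ a, Q a = 1) (hM : 0 < M) {i : Fin M} {Δ : ℝ}
    (hrob : tvDist Q (T i) ≤ (minTVfrom T i - Δ) / 2) (h : dglClassify hM T ν ≠ i) :
    ∃ p q : Fin M, p < q ∧ Δ / 2 ≤ |∑ a ∈ dglSet T p q, Q a - ∑ a ∈ dglSet T p q, ν a| := by
  have hM2 : 2 ≤ M := by
    have := Fin.val_ne_of_ne h
    omega
  obtain ⟨p, q, hpq, hscore⟩ := exists_dglScore_eq T ν hM2 i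
  refine ⟨p, q, hpq, ?_⟩
  have hTQ := abs_sum_sub_sum_le_tvDist (P := T i) (Q := Q) (by rw [hT1, hQ1]) (dglSet T p q)
  have htri := abs_sub_le (∑ a ∈ dglSet T p q, T i a) (∑ a ∈ dglSet T p q, Q a)
    (∑ a ∈ dglSet T p q, ν a)
  linarith [minTVfrom_le_two_mul_dglScore T ν hT1 hM h, tvDist_comm Q (T i)]

end DGL

section Hoeffding

variable {Ω ι : Type*} [MeasurableSpace Ω] {μ : Measure Ω}

lemma measureReal_abs_sum_ge_le_of_iIndepFun {X : ι → Ω → ℝ} (h_indep : iIndepFun X μ)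
    {c : ι → NNReal} {s : Finset ι} (h_subG : ∀ i ∈ s, HasSubgaussianMGF (X i) (c i) μ)
    {ε : ℝ} (hε : 0 ≤ ε) :
    μ.real {ω | ε ≤ |∑ i ∈ s, X i ω|} ≤ 2 * exp (-ε ^ 2 / (2 * ∑ i ∈ s, c i)) := by
  have := h_indep.isProbabilityMeasure
  have h_indep_neg : iIndepFun (fun i ↦ -X i) μ :=
    h_indep.comp (fun _ x ↦ -x) fun _ ↦ measurable_neg
  have h_upper := HasSubgaussianMGF.measure_sum_ge_le_of_iIndepFun h_indep h_subG hε
  have h_lower := HasSubgaussianMGF.measure_sum_ge_le_of_iIndepFun h_indep_neg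
    (fun i hi ↦ (h_subG i hi).neg) hε
  calc μ.real {ω | ε ≤ |∑ i ∈ s, X i ω|}
      ≤ μ.real ({ω | ε ≤ ∑ i ∈ s, X i ω} ∪ {ω | ε ≤ ∑ i ∈ s, (-X i) ω}) := by
        refine measureReal_mono fun ω hω ↦ ?_
        simpa [le_abs', le_neg, or_comm] using hω
    _ ≤ _ := (measureReal_union_le _ _).trans (by linarith)

lemma hasSubgaussianMGF_indicator_sub_measureReal [IsProbabilityMeasure μ] {E : Set Ω}
    (hE : MeasurableSet E) :
    HasSubgaussianMGF (fun ω ↦ E.indicator 1 ω - μ.real E) (1 / 4) μ := by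
  have h := hasSubgaussianMGF_of_mem_Icc (μ := μ) (X := E.indicator 1) (a := 0) (b := 1)
    (measurable_one.indicator hE).aemeasurable
    (ae_of_all _ fun ω ↦ by by_cases hω : ω ∈ E <;> simp [hω])
  rw [integral_indicator_one hE] at h
  convert h using 1
  norm_num

end Hoeffding

section Empirical

variable {𝒳 : Type*} [Fintype 𝒳] [DecidableEq 𝒳]

lemma sum_empDist {N : ℕ} (x : Fin N → 𝒳) (B : Finset 𝒳) :
    ∑ a ∈ B, empDist x a = (Finset.univ.filter fun k ↦ x k ∈ B).card / N := by
  simp only [empDist, ← Finset.sum_div]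
  congr 1
  exact_mod_cast Finset.sum_card_fiberwise_eq_card_filter _ _ _

variable {Ω : Type*} [MeasurableSpace Ω] [MeasurableSpace 𝒳] [MeasurableSingletonClass 𝒳]
  {μ : Measure Ω} [IsProbabilityMeasure μ]

lemma measureReal_abs_sub_sum_empDist_ge_le {n : ℕ} (hn : 0 < n) {Z : Fin n → Ω → 𝒳}
    (hmeas : ∀ k, Measurable (Z k)) (hindep : iIndepFun Z μ) {P : 𝒳 → ℝ}
    (hlaw : ∀ k a, μ.real (Z k ⁻¹' {a}) = P a) (B : Finset 𝒳) {δ : ℝ} (hδ : 0 ≤ δ) :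
    μ.real {ω | δ ≤ |∑ a ∈ B, P a - ∑ a ∈ B, empDist (fun k ↦ Z k ω) a|}
      ≤ 2 * exp (-2 * n * δ ^ 2) := by
  set p := ∑ a ∈ B, P a
  have hp : ∀ k, μ.real (Z k ⁻¹' B) = p := fun k ↦ by
    rw [← sum_measureReal_preimage_singleton B fun a _ ↦ hmeas k (measurableSet_singleton a)]
    simp [hlaw, p]
  let X : Fin n → Ω → ℝ := fun k ω ↦ (Z k ⁻¹' B).indicator 1 ω - p
  have hX_indep : iIndepFun X μ :=
    hindep.comp (fun _ a ↦ (B : Set 𝒳).indicator 1 a - p) fun _ ↦ measurable_of_finite _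
  have hX_subG : ∀ k ∈ Finset.univ, HasSubgaussianMGF (X k) (1 / 4) μ := fun k _ ↦ by
    simpa [X, hp k] using
      hasSubgaussianMGF_indicator_sub_measureReal (μ := μ) (hmeas k B.measurableSet)
  have hsum : ∀ ω, ∑ k, X k ω = n * (∑ a ∈ B, empDist (fun k ↦ Z k ω) a - p) := fun ω ↦ by
    rw [sum_empDist]
    simp only [X, Set.indicator, Set.mem_preimage, SetLike.mem_coe, Pi.one_apply,
      Finset.sum_sub_distrib, Finset.sum_boole, Finset.sum_const, Finset.card_univ,
      Fintype.card_fin, nsmul_eq_mul]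
    field_simp
  have := measureReal_abs_sum_ge_le_of_iIndepFun hX_indep hX_subG (ε := n * δ) (by positivity)
  convert this using 2
  · ext ω
    have hn' : (0 : ℝ) < n := by exact_mod_cast hn
    rw [Set.mem_ofPred_eq, Set.mem_ofPred_eq, hsum, abs_mul, abs_sub_comm, Nat.abs_cast,
      mul_le_mul_iff_of_pos_left hn']
  · congr 1
    simp only [Finset.sum_const, Finset.card_univ, Fintype.card_fin, nsmul_eq_mul]
    push_cast
    field_simp
    ring

end Empirical

lemma mul_sub_one_mul_exp_le {m t c : ℝ} (hm : 2 ≤ m) (ht : t ≠ 0) :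
    m * (m - 1) * (2 * exp (-(t * c))) ≤ 2 * m * exp (-t * (c - 2 * log (m - 1) / t)) := by
  have hexp : exp (-t * (c - 2 * log (m - 1) / t)) = (m - 1) ^ 2 * exp (-(t * c)) := by
    rw [show -t * (c - 2 * log (m - 1) / t) = log (m - 1) + log (m - 1) + -(t * c) by
        field_simp; ring, exp_add, exp_add, exp_log (by linarith)]
    ring
  have : 0 ≤ m * (m - 1) * (m - 2) * exp (-(t * c)) := by
    have : 0 ≤ m - 2 := by linarith
    have : 0 ≤ m - 1 := by linarith
    positivity
  rw [hexp]
  nlinarith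

theorem stmt_11 {𝒳 : Type*} [Fintype 𝒳] [DecidableEq 𝒳] [MeasurableSpace 𝒳]
    [MeasurableSingletonClass 𝒳]
    {Ω : Type*} [MeasurableSpace Ω] (μ : Measure Ω) [IsProbabilityMeasure μ]
    {M : ℕ} (hM : 2 ≤ M)
    (P T : Fin M → 𝒳 → ℝ)
    (hP0 : ∀ i a, 0 ≤ P i a) (hP1 : ∀ i, ∑ a, P i a = 1)
    (hT1 : ∀ i, ∑ a, T i a = 1)
    (Δ : ℝ) (hΔ : 0 < Δ)
    (hrob : ∀ i, tvDist (P i) (T i) ≤ (minTVfrom T i - Δ) / 2)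
    (i : Fin M) {n : ℕ} (hn : 0 < n)
    (Z : Fin n → Ω → 𝒳)
    (hmeas : ∀ k, Measurable (Z k))
    (hindep : iIndepFun Z μ)
    (hdist : ∀ k a, μ (Z k ⁻¹' {a}) = ENNReal.ofReal (P i a)) :
    (μ {ω | dglClassify (by omega : 0 < M) T (empDist fun k => Z k ω) ≠ i}).toReal ≤
      2 * M * Real.exp (-(n : ℝ) * (Δ ^ 2 / 2 - 2 * Real.log ((M : ℝ) - 1) / n)) := by
  have hlaw : ∀ k a, μ.real (Z k ⁻¹' {a}) = P i a := fun k a ↦ by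
    rw [measureReal_def, hdist, ENNReal.toReal_ofReal (hP0 i a)]
  set deviation : Fin M × Fin M → Set Ω := fun r ↦ {ω | Δ / 2 ≤
    |∑ a ∈ dglSet T r.1 r.2, P i a - ∑ a ∈ dglSet T r.1 r.2, empDist (fun k ↦ Z k ω) a|}
  have hcover : {ω | dglClassify (by omega : 0 < M) T (empDist fun k ↦ Z k ω) ≠ i} ⊆
      ⋃ r ∈ (Finset.univ : Finset (Fin M)).offDiag, deviation r :=
    fun ω hω ↦ by
      obtain ⟨p, q, hpq, hdev⟩ :=
        exists_abs_sub_ge_of_dglClassify_ne T _ hT1 (hP1 i) _ (hrob i) hω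
      exact Set.mem_biUnion (x := (p, q)) (by simpa using hpq.ne) hdev
  calc μ.real {ω | dglClassify (by omega : 0 < M) T (empDist fun k ↦ Z k ω) ≠ i}
      ≤ ∑ r ∈ (Finset.univ : Finset (Fin M)).offDiag, μ.real (deviation r) :=
        (measureReal_mono hcover (measure_ne_top _ _)).trans (measureReal_biUnion_finset_le _ _)
    _ ≤ ∑ r ∈ (Finset.univ : Finset (Fin M)).offDiag, 2 * exp (-2 * n * (Δ / 2) ^ 2) :=
        Finset.sum_le_sum fun r _ ↦
          measureReal_abs_sub_sum_empDist_ge_le hn hmeas hindep hlaw _ (by positivity)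
    _ = M * (M - 1) * (2 * exp (-(n * (Δ ^ 2 / 2)))) := by
        rw [Finset.sum_const, Finset.offDiag_card, nsmul_eq_mul, Finset.card_univ,
          Fintype.card_fin, Nat.cast_sub (Nat.le_mul_self M)]
        push_cast
        ring_nf
    _ ≤ 2 * M * exp (-(n : ℝ) * (Δ ^ 2 / 2 - 2 * log ((M : ℝ) - 1) / n)) :=
        mul_sub_one_mul_exp_le (by exact_mod_cast hM) (by positivity)
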